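/- Let p ≥ 2 and let X ∈ Sym⁺(p) have p pairwise distinct eigenvalues. Then the set 𝓔_X of eigen-decompositions of X has exactly p!·2^{p−1} elements. -/

import Mathlib

open Matrix

/-- `p × p` real matrices. -/
abbrev Mat (p : ℕ) := Matrix (Fin p) (Fin p) ℝ

/-- `U ∈ SO(p)`: a rotation matrix. -/
def IsSO {p : ℕ} (U : Mat p) : Prop := U * Uᵀ = 1 ∧ U.det = 1

/-- `D ∈ Diag⁺(p)`: diagonal with positive diagonal entries. -/
def IsDiagPos {p : ℕ} (D : Mat p) : Prop := D.IsDiag ∧ ∀ i, 0 < D i i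

/-- Antisymmetric matrix. -/
def IsAntisym {p : ℕ} (A : Mat p) : Prop := Aᵀ = -A

/-- The permutation matrix `P⁰_π`: in column `j`, the entry `π j` equals 1. -/
def P0 {p : ℕ} (π : Equiv.Perm (Fin p)) : Mat p :=
  Matrix.of fun i j => if i = π j then (1 : ℝ) else 0

/-- `diag(−1,1,…,1)`. -/
def flipMat (p : ℕ) : Mat p :=
  Matrix.diagonal fun i => if (i : ℕ) = 0 then (-1 : ℝ) else 1

open scoped Classical in
/-- `P_π`: the determinant-one modification of `P⁰_π`. -/
noncomputable def Pmat {p : ℕ} (π : Equiv.Perm (Fin p)) : Mat p :=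
  if (P0 π).det = 1 then P0 π else flipMat p * P0 π

/-- `D_π := P_π D P_πᵀ`. -/
noncomputable def permDiag {p : ℕ} (π : Equiv.Perm (Fin p)) (D : Mat p) : Mat p :=
  Pmat π * D * (Pmat π)ᵀ

/-- The stabilizer group `G_D = {R ∈ SO(p) : R D Rᵀ = D}`. -/
def GD {p : ℕ} (D : Mat p) : Set (Mat p) := {R | IsSO R ∧ R * D * Rᵀ = D}

/-- Squared Frobenius norm. -/
noncomputable def frobSq {p : ℕ} (A : Mat p) : ℝ := ∑ i, ∑ j, (A i j) ^ 2

/-- `d_SO(U,V)²`: the minimal value of `‖A‖_F²/2` over antisymmetric `A` with `exp A = V Uᵀ`. -/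
noncomputable def dSOsq {p : ℕ} (U V : Mat p) : ℝ :=
  sInf {x | ∃ A : Mat p, IsAntisym A ∧ NormedSpace.exp A = V * Uᵀ ∧ x = frobSq A / 2}

/-- `d_𝒟(D,Λ)²`. -/
noncomputable def dDsq {p : ℕ} (D Λ : Mat p) : ℝ :=
  ∑ i, (Real.log (Λ i i) - Real.log (D i i)) ^ 2

/-- The geodesic distance on `SO(p) × Diag⁺(p)` (with weight `k`). -/
noncomputable def gdist {p : ℕ} (k : ℝ) (a b : Mat p × Mat p) : ℝ :=
  Real.sqrt (k * dSOsq a.1 b.1 + dDsq a.2 b.2)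

/-- `𝓔_X`: the set of versions (eigen-decompositions) of `X`. -/
def Versions {p : ℕ} (X : Mat p) : Set (Mat p × Mat p) :=
  {a | IsSO a.1 ∧ IsDiagPos a.2 ∧ a.1 * a.2 * a.1ᵀ = X}

/-- The scaling–rotation distance on `Sym⁺(p)`. -/
noncomputable def dSR {p : ℕ} (k : ℝ) (X Y : Mat p) : ℝ :=
  sInf {x | ∃ a ∈ Versions X, ∃ b ∈ Versions Y, x = gdist k a b}

/-! Write `X = U₀ Λ U₀ᵀ` with `U₀ ∈ SO(p)` and `Λ` diagonal; `(U, D) ↦ (U₀ᵀ U, D)` identifies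
the versions of `X` with those of `Λ`. If `W D Wᵀ = Λ` then `Λ W = W D`, so an entry `W i j` can
be nonzero only when `λᵢ = D j j`; with distinct eigenvalues every column of the orthogonal
matrix `W` then has exactly one nonzero entry, equal to `±1`. Hence the versions of `Λ` are the
pairs `(P⁰_σ diag(s), diag(λ ∘ σ))` for a permutation `σ` and signs `s` with `∏ s = sign σ`
(this is `det W = 1`). These pairs form the kernel of the surjection `(σ, s) ↦ ∏ s / sign σ`
onto `ℤˣ`, of index 2 in a group of order `p! · 2ᵖ`. -/

open Equiv

section

variable {ι : Type*} [Fintype ι] [DecidableEq ι]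

def prodDivSign : Perm ι × (ι → ℤˣ) →* ℤˣ :=
  MonoidHom.mk' (fun x => (∏ i, x.2 i) / Perm.sign x.1) fun x y => by
    simp only [Prod.fst_mul, Prod.snd_mul, Pi.mul_apply, Finset.prod_mul_distrib, map_mul,
      mul_div_mul_comm]

lemma prodDivSign_surjective [Nonempty ι] : Function.Surjective (prodDivSign (ι := ι)) := by
  intro u
  obtain ⟨i⟩ := ‹Nonempty ι›
  exact ⟨(1, Pi.mulSingle i u), by simp [prodDivSign]⟩

lemma ncard_setOf_prod_eq_sign [Nonempty ι] :
    {x : Perm ι × (ι → ℤˣ) | ∏ i, x.2 i = Perm.sign x.1}.ncard =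
      (Fintype.card ι).factorial * 2 ^ (Fintype.card ι - 1) := by
  have hunits : Nat.card ℤˣ = 2 := by rw [Nat.card_eq_fintype_card, Fintype.card_units_int]
  have hindex : (prodDivSign (ι := ι)).ker.index = 2 := by
    rw [Subgroup.index_ker, MonoidHom.range_eq_top.mpr prodDivSign_surjective, Subgroup.card_top,
      hunits]
  have hker := (prodDivSign (ι := ι)).ker.card_mul_index
  rw [hindex, Nat.card_prod, Nat.card_perm, Nat.card_pi, Nat.card_eq_fintype_card (α := ι)] at hker
  obtain ⟨n, hn⟩ := Nat.exists_eq_succ_of_ne_zero (Fintype.card_ne_zero (α := ι))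
  simp only [hunits, Finset.prod_const, Finset.card_univ, hn, pow_succ, ← mul_assoc] at hker
  rw [← Nat.card_coe_set_eq, hn, Nat.succ_sub_one, ← Nat.eq_of_mul_eq_mul_right two_pos hker]
  exact Nat.card_congr (Equiv.subtypeEquivRight fun x => by simp [prodDivSign, div_eq_one])

variable {R : Type*} [CommRing R] {e : ι → R}

lemma diagonal_mul_self_of_mul_self_eq_one (he : ∀ i, e i * e i = 1) :
    diagonal e * diagonal e = 1 := by
  rw [diagonal_mul_diagonal, ← diagonal_one]
  exact congrArg diagonal (funext he)

lemma diagonal_mul_diagonal_mul_diagonal_of_mul_self_eq_one (he : ∀ i, e i * e i = 1)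
    (d : ι → R) : diagonal e * diagonal d * diagonal e = diagonal d := by
  rw [(commute_diagonal e d).eq, mul_assoc, diagonal_mul_self_of_mul_self_eq_one he, mul_one]

end

variable {p : ℕ}

lemma IsSO.transpose_mul_self {U : Mat p} (hU : IsSO U) : Uᵀ * U = 1 := mul_eq_one_comm.mp hU.1

lemma IsSO.mul {U V : Mat p} (hU : IsSO U) (hV : IsSO V) : IsSO (U * V) :=
  ⟨by rw [transpose_mul, mul_assoc, ← mul_assoc V, hV.1, one_mul, hU.1],
    by rw [det_mul, hU.2, hV.2, one_mul]⟩

lemma IsSO.transpose {U : Mat p} (hU : IsSO U) : IsSO Uᵀ :=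
  ⟨by rw [transpose_transpose, hU.transpose_mul_self], by rw [det_transpose, hU.2]⟩

lemma versions_conj {U₀ : Mat p} (hU₀ : IsSO U₀) (Y : Mat p) :
    Versions (U₀ * Y * U₀ᵀ) = (fun a => (U₀ * a.1, a.2)) '' Versions Y := by
  ext ⟨U, D⟩
  constructor
  · rintro ⟨hU, hD, hUD⟩
    refine ⟨(U₀ᵀ * U, D), ⟨hU₀.transpose.mul hU, hD, ?_⟩, ?_⟩
    · calc U₀ᵀ * U * D * (U₀ᵀ * U)ᵀ = U₀ᵀ * (U * D * Uᵀ) * U₀ := by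
            simp only [transpose_mul, transpose_transpose, mul_assoc]
        _ = Y := by
            rw [hUD, mul_assoc, mul_assoc, hU₀.transpose_mul_self, mul_one, ← mul_assoc,
              hU₀.transpose_mul_self, one_mul]
    · simp only [← mul_assoc, hU₀.1, one_mul]
  · rintro ⟨⟨W, D⟩, ⟨hW, hD, rfl⟩, h⟩
    obtain ⟨rfl, rfl⟩ := Prod.ext_iff.mp h
    exact ⟨hU₀.mul hW, hD, by simp only [transpose_mul, mul_assoc]⟩

lemma ncard_versions_conj {U₀ : Mat p} (hU₀ : IsSO U₀) (Y : Mat p) :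
    (Versions (U₀ * Y * U₀ᵀ)).ncard = (Versions Y).ncard := by
  refine (versions_conj hU₀ Y).symm ▸ Set.ncard_image_of_injective _ fun a b h => ?_
  obtain ⟨h₁, h₂⟩ := Prod.ext_iff.mp h
  refine Prod.ext ?_ h₂
  simpa only [← mul_assoc, hU₀.transpose_mul_self, one_mul] using congrArg (U₀ᵀ * ·) h₁

lemma flipMat_mul_self : flipMat p * flipMat p = 1 :=
  diagonal_mul_self_of_mul_self_eq_one fun i => by split_ifs <;> norm_num

lemma flipMat_mul_diagonal_mul_flipMat (d : Fin p → ℝ) :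
    flipMat p * diagonal d * flipMat p = diagonal d :=
  diagonal_mul_diagonal_mul_diagonal_of_mul_self_eq_one (fun i => by split_ifs <;> norm_num) d

lemma transpose_flipMat : (flipMat p)ᵀ = flipMat p := diagonal_transpose _

lemma det_flipMat [NeZero p] : (flipMat p).det = -1 := by
  simp [flipMat, Fin.val_eq_zero_iff, Finset.prod_ite_eq']

lemma exists_isSO_conj_eq_of_orthogonal [NeZero p] {V : Mat p} (hV : V * Vᵀ = 1)
    (d : Fin p → ℝ) :
    ∃ U, IsSO U ∧ U * diagonal d * Uᵀ = V * diagonal d * Vᵀ := by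
  have hdet : V.det * V.det = 1 := by
    simpa only [det_mul, det_transpose, det_one] using congrArg det hV
  rcases mul_self_eq_one_iff.mp hdet with h | h
  · exact ⟨V, ⟨hV, h⟩, rfl⟩
  refine ⟨V * flipMat p, ⟨?_, by rw [det_mul, h, det_flipMat, neg_mul_neg, one_mul]⟩, ?_⟩
  · rw [transpose_mul, transpose_flipMat, mul_assoc, ← mul_assoc (flipMat p), flipMat_mul_self,
      one_mul, hV]
  · calc V * flipMat p * diagonal d * (V * flipMat p)ᵀ
          = V * (flipMat p * diagonal d * flipMat p) * Vᵀ := by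
            simp only [transpose_mul, transpose_flipMat, mul_assoc]
      _ = V * diagonal d * Vᵀ := by rw [flipMat_mul_diagonal_mul_flipMat]

lemma IsHermitian.exists_isSO_eq_conj_diagonal [NeZero p] {X : Mat p} (hX : X.IsHermitian) :
    ∃ U, IsSO U ∧ X = U * diagonal hX.eigenvalues * Uᵀ := by
  have hV := hX.eigenvectorUnitary.2
  rw [mem_unitaryGroup_iff, star_eq_conjTranspose, conjTranspose_eq_transpose_of_trivial] at hV
  obtain ⟨U, hU, hUV⟩ := exists_isSO_conj_eq_of_orthogonal hV hX.eigenvalues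
  refine ⟨U, hU, hUV ▸ ?_⟩
  have hspec := hX.spectral_theorem
  rw [Unitary.conjStarAlgAut_apply, star_eq_conjTranspose,
    conjTranspose_eq_transpose_of_trivial] at hspec
  exact hspec

lemma P0_eq_permMatrix (σ : Perm (Fin p)) : P0 σ = σ⁻¹.permMatrix ℝ := by
  ext i j
  simp [P0, PEquiv.toMatrix_apply, Equiv.Perm.inv_def, Equiv.eq_symm_apply, eq_comm]

lemma P0_mul_transpose (σ : Perm (Fin p)) : P0 σ * (P0 σ)ᵀ = 1 := by
  rw [P0_eq_permMatrix, transpose_permMatrix, ← permMatrix_mul, inv_mul_cancel, permMatrix_one]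

lemma det_P0 (σ : Perm (Fin p)) : (P0 σ).det = Perm.sign σ := by
  rw [P0_eq_permMatrix, det_permutation, Perm.sign_inv]

lemma P0_mul_diagonal_mul_transpose (σ : Perm (Fin p)) (d : Fin p → ℝ) :
    P0 σ * diagonal (d ∘ σ) * (P0 σ)ᵀ = diagonal d := by
  rw [P0_eq_permMatrix, transpose_permMatrix, inv_inv, PEquiv.toMatrix_toPEquiv_mul,
    PEquiv.mul_toMatrix_toPEquiv, submatrix_submatrix, Function.comp_id, Function.id_comp,
    Perm.inv_def, submatrix_diagonal_equiv, Function.comp_assoc, Equiv.self_comp_symm,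
    Function.comp_id]

noncomputable def signedPerm (σ : Perm (Fin p)) (s : Fin p → ℤˣ) : Mat p :=
  P0 σ * diagonal fun j => ((s j : ℤ) : ℝ)

lemma signedPerm_apply (σ : Perm (Fin p)) (s : Fin p → ℤˣ) (i j : Fin p) :
    signedPerm σ s i j = if i = σ j then ((s j : ℤ) : ℝ) else 0 := by
  simp [signedPerm, P0]

lemma units_int_cast_mul_self (u : ℤˣ) : ((u : ℤ) : ℝ) * ((u : ℤ) : ℝ) = 1 := by
  rcases Int.units_eq_one_or u with h | h <;> simp [h]

lemma signedPerm_mul_transpose (σ : Perm (Fin p)) (s : Fin p → ℤˣ) :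
    signedPerm σ s * (signedPerm σ s)ᵀ = 1 := by
  rw [signedPerm, transpose_mul, diagonal_transpose, mul_assoc, ← mul_assoc (diagonal _),
    diagonal_mul_self_of_mul_self_eq_one fun j => units_int_cast_mul_self (s j), one_mul,
    P0_mul_transpose]

lemma isSO_signedPerm_iff (σ : Perm (Fin p)) (s : Fin p → ℤˣ) :
    IsSO (signedPerm σ s) ↔ ∏ j, s j = Perm.sign σ := by
  have hdet : (signedPerm σ s).det = ((Perm.sign σ * ∏ j, s j : ℤˣ) : ℤ) := by
    simp [signedPerm, det_mul, det_P0, det_diagonal]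
  rw [IsSO, hdet, Int.cast_eq_one, Units.val_eq_one, mul_eq_one_iff_inv_eq, Int.units_inv_eq_self]
  exact ⟨fun h => h.2.symm, fun h => ⟨signedPerm_mul_transpose σ s, h.symm⟩⟩

lemma signedPerm_mul_diagonal_mul_transpose (σ : Perm (Fin p)) (s : Fin p → ℤˣ)
    (d : Fin p → ℝ) :
    signedPerm σ s * diagonal (d ∘ σ) * (signedPerm σ s)ᵀ = diagonal d := by
  calc signedPerm σ s * diagonal (d ∘ σ) * (signedPerm σ s)ᵀ
      = P0 σ * ((diagonal fun j => ((s j : ℤ) : ℝ)) * diagonal (d ∘ σ) *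
          diagonal fun j => ((s j : ℤ) : ℝ)) * (P0 σ)ᵀ := by
        simp only [signedPerm, transpose_mul, diagonal_transpose, mul_assoc]
    _ = diagonal d := by
        rw [diagonal_mul_diagonal_mul_diagonal_of_mul_self_eq_one
          fun j => units_int_cast_mul_self (s j), P0_mul_diagonal_mul_transpose]

noncomputable def signedPermVersion (d : Fin p → ℝ) (x : Perm (Fin p) × (Fin p → ℤˣ)) :
    Mat p × Mat p :=
  (signedPerm x.1 x.2, diagonal (d ∘ x.1))

lemma signedPermVersion_injective {d : Fin p → ℝ} (hd : Function.Injective d) :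
    Function.Injective (signedPermVersion d) := by
  rintro ⟨σ, s⟩ ⟨τ, t⟩ h
  obtain ⟨hW, hD⟩ := Prod.ext_iff.mp h
  obtain rfl : σ = τ :=
    Equiv.ext fun j => hd (by simpa [signedPermVersion] using congrFun₂ hD j j)
  refine Prod.ext rfl (funext fun j => Units.ext (Int.cast_injective (α := ℝ) ?_))
  simpa [signedPermVersion, signedPerm_apply] using congrFun₂ hW (σ j) j

lemma signedPermVersion_mem_versions {d : Fin p → ℝ} (hd : ∀ i, 0 < d i)
    {x : Perm (Fin p) × (Fin p → ℤˣ)} (hx : ∏ j, x.2 j = Perm.sign x.1) :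
    signedPermVersion d x ∈ Versions (diagonal d) :=
  ⟨(isSO_signedPerm_iff _ _).mpr hx,
    ⟨isDiag_diagonal _, fun i => by simpa [signedPermVersion] using hd _⟩,
    signedPerm_mul_diagonal_mul_transpose _ _ _⟩

lemma exists_units_int_cast_eq {w : ℝ} (hw : w * w = 1) : ∃ u : ℤˣ, ((u : ℤ) : ℝ) = w := by
  rcases mul_self_eq_one_iff.mp hw with rfl | rfl
  exacts [⟨1, by simp⟩, ⟨-1, by simp⟩]

lemma exists_eq_signedPerm_of_orthogonal {W : Mat p} (hW : Wᵀ * W = 1)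
    (hcol : ∀ i i' j, W i j ≠ 0 → W i' j ≠ 0 → i = i') : ∃ σ s, W = signedPerm σ s := by
  have hcolumns : ∀ j j', ∑ i, W i j * W i j' = (1 : Mat p) j j' := fun j j' => by
    simpa [mul_apply] using congrFun₂ hW j j'
  have hnonzero : ∀ j, ∃ i, W i j ≠ 0 := fun j => by
    by_contra! h
    simpa [h] using hcolumns j j
  choose τ hτ using hnonzero
  have hzero : ∀ i j, i ≠ τ j → W i j = 0 := fun i j hi => by
    by_contra h
    exact hi (hcol i (τ j) j h (hτ j))
  have hcolumn_single : ∀ j j', W (τ j) j * W (τ j) j' = (1 : Mat p) j j' := fun j j' => by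
    rw [← hcolumns, Finset.sum_eq_single (τ j) (fun i _ hi => by rw [hzero i j hi, zero_mul])
      (by simp)]
  have hτinj : Function.Injective τ := fun j j' hjj' => by
    by_contra hne
    refine mul_ne_zero (hjj' ▸ hτ j) (hτ j') ?_
    simpa [one_apply_ne hne, hjj'] using hcolumn_single j j'
  let σ : Perm (Fin p) := Equiv.ofBijective τ (Finite.injective_iff_bijective.mp hτinj)
  choose s hs using fun j => exists_units_int_cast_eq (by simpa using hcolumn_single j j)
  refine ⟨σ, s, ext fun i j => ?_⟩
  rw [signedPerm_apply]
  split_ifs with h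
  · rw [h, hs]; rfl
  · exact hzero i j h

lemma versions_diagonal {d : Fin p → ℝ} (hpos : ∀ i, 0 < d i) (hd : Function.Injective d) :
    Versions (diagonal d) = signedPermVersion d '' {x | ∏ j, x.2 j = Perm.sign x.1} := by
  ext ⟨W, D⟩
  constructor
  · rintro ⟨hW, ⟨hDdiag, -⟩, hWD⟩
    have hD : diagonal D.diag = D := hDdiag.diagonal_diag
    have hcomm : diagonal d * W = W * D := by
      rw [← hWD, mul_assoc, mul_assoc, hW.transpose_mul_self, mul_one]
    have heig : ∀ i j, W i j ≠ 0 → d i = D j j := fun i j hij => by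
      have := congrFun₂ hcomm i j
      rw [← hD, diagonal_mul, mul_diagonal, mul_comm] at this
      exact mul_left_cancel₀ hij this
    obtain ⟨σ, s, rfl⟩ := exists_eq_signedPerm_of_orthogonal hW.transpose_mul_self
      fun i i' j hi hi' => hd ((heig i j hi).trans (heig i' j hi').symm)
    refine ⟨(σ, s), (isSO_signedPerm_iff σ s).mp hW, Prod.ext rfl ?_⟩
    rw [← hD]
    exact congrArg diagonal (funext fun j => heig (σ j) j (by simp [signedPerm_apply]))
  · rintro ⟨x, hx, h⟩
    exact h ▸ signedPermVersion_mem_versions hpos hx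

/-- an SPD matrix with pairwise distinct eigenvalues has exactly
`p! · 2^(p−1)` eigen-decompositions. -/
theorem card_versions_of_distinct_eigenvalues {p : ℕ} (hp : 2 ≤ p)
    (X : Mat p) (hX : X.PosDef) (hdist : Function.Injective hX.1.eigenvalues) :
    (Versions X).ncard = Nat.factorial p * 2 ^ (p - 1) := by
  have : NeZero p := ⟨by omega⟩
  obtain ⟨U, hU, hXU⟩ := IsHermitian.exists_isSO_eq_conj_diagonal hX.1
  rw [hXU, ncard_versions_conj hU, versions_diagonal hX.eigenvalues_pos hdist,
    Set.ncard_image_of_injective _ (signedPermVersion_injective hdist), ncard_setOf_prod_eq_sign,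
    Fintype.card_fin]
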